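/- arXiv:1505.04309 — 4 statements merged into one kernel-verified Lean document; each statement's English description precedes it below -/
import Mathlib

section
/- Let k be a natural number, G a finite multigraph, and v a vertex of G such that the degree of v is less than 2k and p_G(x,y) ≥ k for any two distinct neighbors x, y of v. Then v is not a cut-vertex of G. -/
/-- A finite multigraph on `V`: `mult u v` is the number of parallel edges joining
`u` and `v`; there are no loops. -/
structure Multigraph (V : Type) where
  mult : V → V → ℕ
  symm : ∀ u v, mult u v = mult v u
  loopless : ∀ v, mult v v = 0

namespace Multigraph

variable {V : Type}

/-- The degree of a vertex of a multigraph. -/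
def degree [Fintype V] (G : Multigraph V) (v : V) : ℕ := ∑ u, G.mult v u

/-- The number of times the edge `{u, w}` is used by consecutive entries of the
vertex list `l`. -/
def pairCount [DecidableEq V] (l : List V) (u w : V) : ℕ :=
  ((l.zip l.tail).count (u, w)) + ((l.zip l.tail).count (w, u))

/-- `l` is the vertex list of a path from `x` to `y` in `G`. -/
def IsPathList (G : Multigraph V) (x y : V) (l : List V) : Prop :=
  l ≠ [] ∧ l.Nodup ∧ l.head? = some x ∧ l.getLast? = some y ∧
    l.Chain' (fun a b => 1 ≤ G.mult a b)

/-- `G` has (at least) `k` pairwise edge-disjoint paths from `x` to `y`,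
i.e. `p_G(x, y) ≥ k`. -/
def HasEdgeDisjointPaths [Fintype V] [DecidableEq V] (G : Multigraph V)
    (x y : V) (k : ℕ) : Prop :=
  ∃ P : Fin k → List V, (∀ i, G.IsPathList x y (P i)) ∧
    ∀ u w : V, (∑ i, pairCount (P i) u w) ≤ G.mult u w

/-- The underlying simple graph of a multigraph. -/
def toSimpleGraph (G : Multigraph V) : SimpleGraph V where
  Adj u v := 1 ≤ G.mult u v
  symm := ⟨fun u v h => by rwa [G.symm v u]⟩
  loopless := ⟨fun v h => by simp only [G.loopless v] at h; omega⟩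

/-- `v` is a cut-vertex of `G` if deleting `v` increases the number of connected
components. -/
def IsCutVertex [Fintype V] (G : Multigraph V) (v : V) : Prop :=
  Nat.card ((G.toSimpleGraph.induce {u : V | u ≠ v}).ConnectedComponent) >
    Nat.card G.toSimpleGraph.ConnectedComponent

/-- `G'` (a lifting of `G` at `v`) is admissible: for all distinct `x, y ≠ v`,
the maximum number of pairwise edge-disjoint `x`–`y` paths is the same in `G`
and in `G'`. -/
def AdmissibleAt [Fintype V] [DecidableEq V] (G G' : Multigraph V) (v : V) : Prop :=
  ∀ x y : V, x ≠ v → y ≠ v → x ≠ y → ∀ k : ℕ,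
    (G.HasEdgeDisjointPaths x y k ↔ G'.HasEdgeDisjointPaths x y k)

end Multigraph

/-!
If two neighbours `x`, `y` of `v` were joined only through `v`, each of the `k` edge-disjoint
`x`–`y` paths would pass through `v` and use two of the fewer than `2k` edges at `v`. Hence all
neighbours of `v` lie in one component of `G - v`, any walk of `G` through `v` can be rerouted
around it, and the components of `G - v` inject into those of `G`.
-/

theorem List.mem_zip_tail_append_cons_cons {α : Type*} (s t : List α) (a b : α) :
    (a, b) ∈ (s ++ a :: b :: t).zip (s ++ a :: b :: t).tail := by
  induction s with
  | nil => simp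
  | cons c s ih => cases s <;> simp_all

theorem List.exists_mem_zip_tail_of_mem {α : Type*} {l : List α} {x y v : α}
    (hx : l.head? = some x) (hy : l.getLast? = some y) (hvx : v ≠ x) (hvy : v ≠ y)
    (hv : v ∈ l) : ∃ a b, (a, v) ∈ l.zip l.tail ∧ (v, b) ∈ l.zip l.tail := by
  obtain ⟨s, t, rfl⟩ := List.append_of_mem hv
  obtain rfl | ⟨s, a, rfl⟩ := s.eq_nil_or_concat
  · simp_all
  obtain _ | ⟨b, t⟩ := t
  · simp_all
  refine ⟨a, b, ?_, ?_⟩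
  · simpa using mem_zip_tail_append_cons_cons s (b :: t) a v
  · simpa using mem_zip_tail_append_cons_cons (s ++ [a]) t v b

theorem SimpleGraph.reachable_induce_of_isChain {V : Type*} {H : SimpleGraph V} {s : Set V}
    {l : List V} {x y : V} (hl : l.IsChain H.Adj) (hs : ∀ u ∈ l, u ∈ s)
    (hx : l.head? = some x) (hy : l.getLast? = some y) (hxs : x ∈ s) (hys : y ∈ s) :
    (H.induce s).Reachable ⟨x, hxs⟩ ⟨y, hys⟩ := by
  have hl' : l.IsChain fun a b => H.Adj a b ∧ a ∈ s ∧ b ∈ s :=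
    hl.imp_of_mem_imp fun a b ha hb hab => ⟨hab, hs a ha, hs b hb⟩
  refine hl'.backwards_induction
    (fun u => ∀ hu : u ∈ s, (H.induce s).Reachable ⟨u, hu⟩ ⟨y, hys⟩) l ?_ ?_ x
    (List.mem_of_mem_head? hx) hxs
  · rintro a b ⟨hab, has, hbs⟩ hb -
    exact (show (H.induce s).Adj ⟨a, has⟩ ⟨b, hbs⟩ from hab).reachable.trans (hb hbs)
  · intro hne
    exact (List.getLast_eq_iff_getLast?_eq_some hne).2 hy ▸ fun _ => .rfl

namespace SimpleGraph

variable {V : Type*} {H : SimpleGraph V} {v : V}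

theorem Reachable.induce_ne
    (hnbr : ∀ x y (hx : x ≠ v) (hy : y ≠ v), H.Adj v x → H.Adj v y →
      (H.induce {u | u ≠ v}).Reachable ⟨x, hx⟩ ⟨y, hy⟩)
    {x y : V} (hx : x ≠ v) (hy : y ≠ v) (h : H.Reachable x y) :
    (H.induce {u | u ≠ v}).Reachable ⟨x, hx⟩ ⟨y, hy⟩ := by
  -- A walk may enter `v` only between two neighbours of `v`, which `hnbr` reconnects.
  suffices ∀ a (p : H.Walk a y),
      (∀ ha : a ≠ v, (H.induce {u | u ≠ v}).Reachable ⟨a, ha⟩ ⟨y, hy⟩) ∧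
      (a = v → ∀ b (hb : b ≠ v), H.Adj v b →
        (H.induce {u | u ≠ v}).Reachable ⟨b, hb⟩ ⟨y, hy⟩) from
    h.elim fun p => (this x p).1 hx
  clear h hx
  intro a p
  induction p with
  | nil => exact ⟨fun _ => .rfl, fun ha => absurd ha hy⟩
  | @cons a w _ haw _ ih =>
    by_cases hw : w = v
    · subst hw
      exact ⟨fun ha => (ih hy).2 rfl a ha haw.symm, fun ha => absurd ha haw.ne⟩
    · refine ⟨fun ha => ?_, ?_⟩
      · have had : (H.induce {u | u ≠ v}).Adj ⟨a, ha⟩ ⟨w, hw⟩ := haw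
        exact had.reachable.trans ((ih hy).1 hw)
      · rintro rfl b hb hab
        exact (hnbr b w hb hw hab haw).trans ((ih hy).1 hw)

theorem card_connectedComponent_induce_ne_le [Finite V]
    (hnbr : ∀ x y (hx : x ≠ v) (hy : y ≠ v), H.Adj v x → H.Adj v y →
      (H.induce {u | u ≠ v}).Reachable ⟨x, hx⟩ ⟨y, hy⟩) :
    Nat.card (H.induce {u | u ≠ v}).ConnectedComponent ≤ Nat.card H.ConnectedComponent := by
  refine Nat.card_le_card_of_injective (ConnectedComponent.map (Embedding.induce _).toHom) ?_
  intro C D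
  refine ConnectedComponent.ind₂ (fun a b hab => ?_) C D
  rw [ConnectedComponent.map_mk, ConnectedComponent.map_mk, ConnectedComponent.eq] at hab
  exact ConnectedComponent.eq.2 (hab.induce_ne hnbr a.2 b.2)

end SimpleGraph

namespace Multigraph

variable {V : Type} [Fintype V] [DecidableEq V]

theorem two_le_sum_pairCount {l : List V} {a b v : V} (ha : (a, v) ∈ l.zip l.tail)
    (hb : (v, b) ∈ l.zip l.tail) : 2 ≤ ∑ u, pairCount l v u := by
  have hva := List.count_pos_iff.2 ha
  have hvb := List.count_pos_iff.2 hb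
  calc 2 ≤ (l.zip l.tail).count (v, b) + (l.zip l.tail).count (a, v) := by omega
    _ ≤ ∑ u, (l.zip l.tail).count (v, u) + ∑ u, (l.zip l.tail).count (u, v) :=
      add_le_add (Finset.single_le_sum (f := fun u => (l.zip l.tail).count (v, u))
          (fun _ _ => Nat.zero_le _) (Finset.mem_univ b))
        (Finset.single_le_sum (f := fun u => (l.zip l.tail).count (u, v))
          (fun _ _ => Nat.zero_le _) (Finset.mem_univ a))
    _ = ∑ u, pairCount l v u := Finset.sum_add_distrib.symm

theorem sum_sum_pairCount_le_degree {G : Multigraph V} {k : ℕ} {P : Fin k → List V}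
    (hP : ∀ u w, ∑ i, pairCount (P i) u w ≤ G.mult u w) (v : V) :
    ∑ i, ∑ u, pairCount (P i) v u ≤ G.degree v := by
  rw [Finset.sum_comm]
  exact Finset.sum_le_sum fun u _ => hP v u

theorem HasEdgeDisjointPaths.exists_isPathList_not_mem {G : Multigraph V} {x y v : V} {k : ℕ}
    (h : G.HasEdgeDisjointPaths x y k) (hdeg : G.degree v < 2 * k) (hvx : v ≠ x)
    (hvy : v ≠ y) : ∃ l, G.IsPathList x y l ∧ v ∉ l := by
  obtain ⟨P, hP, hdisj⟩ := h
  by_contra! hall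
  have htwo (i : Fin k) : 2 ≤ ∑ u, pairCount (P i) v u := by
    obtain ⟨-, -, hx, hy, -⟩ := hP i
    obtain ⟨a, b, ha, hb⟩ := List.exists_mem_zip_tail_of_mem hx hy hvx hvy (hall _ (hP i))
    exact two_le_sum_pairCount ha hb
  refine hdeg.not_ge ?_
  calc 2 * k = ∑ _i : Fin k, 2 := by simp [mul_comm]
    _ ≤ ∑ i, ∑ u, pairCount (P i) v u := Finset.sum_le_sum fun i _ => htwo i
    _ ≤ G.degree v := sum_sum_pairCount_le_degree hdisj v

theorem reachable_induce_ne_of_adj {G : Multigraph V} {v : V} {k : ℕ}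
    (hdeg : G.degree v < 2 * k)
    (hpaths : ∀ x y : V, x ≠ y → 1 ≤ G.mult v x → 1 ≤ G.mult v y →
      G.HasEdgeDisjointPaths x y k)
    (x y : V) (hx : x ≠ v) (hy : y ≠ v) (hvx : G.toSimpleGraph.Adj v x)
    (hvy : G.toSimpleGraph.Adj v y) :
    (G.toSimpleGraph.induce {u | u ≠ v}).Reachable ⟨x, hx⟩ ⟨y, hy⟩ := by
  obtain rfl | hxy := eq_or_ne x y
  · rfl
  obtain ⟨l, ⟨-, -, hlx, hly, hl⟩, hvl⟩ :=
    (hpaths x y hxy hvx hvy).exists_isPathList_not_mem hdeg hx.symm hy.symm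
  exact SimpleGraph.reachable_induce_of_isChain (H := G.toSimpleGraph) hl
    (fun u hu => ne_of_mem_of_not_mem hu hvl) hlx hly hx hy

end Multigraph

/-- If `v` is a vertex of a finite multigraph `G` with degree less than `2k` such that
there are at least `k` pairwise edge-disjoint paths between any two distinct
neighbours of `v`, then `v` is not a cut-vertex of `G`. -/
theorem not_cutVertex_of_small_degree {V : Type} [Fintype V] [DecidableEq V]
    (k : ℕ) (G : Multigraph V) (v : V)
    (hdeg : G.degree v < 2 * k)
    (hpaths : ∀ x y : V, x ≠ y → 1 ≤ G.mult v x → 1 ≤ G.mult v y →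
      G.HasEdgeDisjointPaths x y k) :
    ¬ G.IsCutVertex v :=
  not_lt.2 <| SimpleGraph.card_connectedComponent_induce_ne_le <|
    Multigraph.reachable_induce_ne_of_adj hdeg hpaths
end

section
/- Let k be a natural number. If G is a 2k-edge-connected finite graph, then G contains k pairwise edge-disjoint spanning trees. -/
open SimpleGraph

/-- A graph `G` is `k`-edge-connected if it remains connected after the deletion of
any fewer than `k` edges. -/
def IsKEdgeConnected {V : Type} (G : SimpleGraph V) (k : ℕ) : Prop :=
  ∀ S : Finset (Sym2 V), S.card < k → (G.deleteEdges ↑S).Connected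

/-!
Take `k` edge-disjoint forests `F i` in `G` with the largest total number of edges. If an edge
`xy` of `G` lies in none of them, putting it into `F i` and removing an edge `f` of the cycle it
closes gives another maximum family, in which `f` is free. The edges that become free along
sequences of such exchanges form a graph each of whose components is connected in every `F i`
using these edges only (the exchange lemma in Diestel's proof of the Nash-Williams–Tutte theorem).

Let `K` be the largest graph with this property. Every edge of `G` between two components of `K`
then lies in some `F i`, and a forest in which every component of `K` is connected has fewer than
`p` edges between the `p` components. So `G` has fewer than `k p` edges between components,
while `2k`-edge-connectivity gives every component at least `2k` leaving edges when `p ≥ 2`,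
hence at least `k p` edges between components. Thus `K`, and with it every `F i`, is connected.
-/

namespace SimpleGraph

section ForestPacking

variable {V : Type*} {G H K : SimpleGraph V} {u v x y : V}

lemma Reachable.of_forall_adj (h : ∀ ⦃a b⦄, G.Adj a b → H.Reachable a b)
    (huv : G.Reachable u v) : H.Reachable u v := by
  obtain ⟨p⟩ := huv
  induction p with
  | nil => rfl
  | cons hadj _ ih => exact (h hadj).trans ih

lemma Reachable.of_le_sup_edge (huv : G.Reachable u v) (hle : G ≤ H ⊔ edge x y)
    (hxy : H.Reachable x y) : H.Reachable u v := by
  refine huv.of_forall_adj fun a b hab => ?_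
  rcases hle hab with hab | hab
  · exact hab.reachable
  · obtain ⟨⟨rfl, rfl⟩ | ⟨rfl, rfl⟩, -⟩ := (edge_adj ..).mp hab
    exacts [hxy, hxy.symm]

lemma IsAcyclic.not_reachable_deleteEdges_of_mem_edges (hH : H.IsAcyclic) {p : H.Walk x y}
    (hp : p.IsPath) {f : Sym2 V} (hf : f ∈ p.edges) : ¬(H.deleteEdges {f}).Reachable x y := by
  classical
  rintro ⟨q⟩
  have hq := q.bypass_isPath.mapLe (deleteEdges_le {f})
  have hpq : p = q.bypass.mapLe _ :=
    congrArg Subtype.val ((hH.subsingleton_path x y).elim ⟨p, hp⟩ ⟨_, hq⟩)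
  rw [hpq, Walk.edges_mapLe_eq_edges] at hf
  simpa using q.bypass.edges_subset_edgeSet hf

lemma edgeSet_deleteEdges_sup_edge (H : SimpleGraph V) (f : Sym2 V) (hxy : x ≠ y) :
    (H.deleteEdges {f} ⊔ edge x y).edgeSet = insert s(x, y) (H.edgeSet \ {f}) := by
  rw [edgeSet_sup, edgeSet_deleteEdges, edgeSet_edge_of_ne hxy, Set.union_singleton]

variable {ι : Type*}

structure IsForestPacking (G : SimpleGraph V) (F : ι → SimpleGraph V) : Prop where
  le : ∀ i, F i ≤ G
  isAcyclic : ∀ i, (F i).IsAcyclic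
  pairwise_disjoint : Pairwise fun i j => Disjoint (F i).edgeSet (F j).edgeSet

def IsFreeEdge (G : SimpleGraph V) (F : ι → SimpleGraph V) (e : Sym2 V) : Prop :=
  e ∈ G.edgeSet ∧ ∀ i, e ∉ (F i).edgeSet

noncomputable def packingSize [Fintype ι] (F : ι → SimpleGraph V) : ℕ :=
  ∑ i, (F i).edgeSet.ncard

def IsMaxForestPacking [Fintype ι] (G : SimpleGraph V) (F : ι → SimpleGraph V) : Prop :=
  IsForestPacking G F ∧
    ∀ F' : ι → SimpleGraph V, IsForestPacking G F' → packingSize F' ≤ packingSize F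

lemma exists_isMaxForestPacking [Fintype ι] [Finite V] (G : SimpleGraph V) :
    ∃ F : ι → SimpleGraph V, IsMaxForestPacking G F := by
  have : Nonempty {F : ι → SimpleGraph V // IsForestPacking G F} :=
    ⟨⟨fun _ => ⊥, fun _ => bot_le, fun _ => isAcyclic_bot, fun _ _ _ => by simp⟩⟩
  obtain ⟨⟨F, hF⟩, hmax⟩ :=
    Finite.exists_max fun F : {F : ι → SimpleGraph V // IsForestPacking G F} => packingSize F.1
  exact ⟨F, hF, fun F' hF' => hmax ⟨F', hF'⟩⟩

def ConnectsComponents (F : ι → SimpleGraph V) (K : SimpleGraph V) : Prop :=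
  ∀ i ⦃u v⦄, K.Reachable u v → (F i ⊓ K).Reachable u v

lemma connectsComponents_sSup (F : ι → SimpleGraph V) :
    ConnectsComponents F (sSup {K | ConnectsComponents F K}) := fun i _ _ huv =>
  huv.of_forall_adj fun _ _ hab => by
    obtain ⟨K, hK, hab⟩ := sSup_adj.mp hab
    exact (hK i hab.reachable).mono (inf_le_inf_left _ (le_sSup hK))

variable [DecidableEq ι] {F : ι → SimpleGraph V}

lemma IsForestPacking.update (hF : IsForestPacking G F) {e : Sym2 V}
    (he : ∀ j, e ∉ (F j).edgeSet) (i : ι) {N : SimpleGraph V} (hNG : N ≤ G)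
    (hN : N.IsAcyclic) (hNE : N.edgeSet ⊆ insert e (F i).edgeSet) :
    IsForestPacking G (Function.update F i N) where
  le j := by
    rcases eq_or_ne j i with rfl | hj
    · simpa using hNG
    · simpa [hj] using hF.le j
  isAcyclic j := by
    rcases eq_or_ne j i with rfl | hj
    · simpa using hN
    · simpa [hj] using hF.isAcyclic j
  pairwise_disjoint := by
    have hN : ∀ j ≠ i, Disjoint N.edgeSet (F j).edgeSet := fun j hj =>
      Set.disjoint_of_subset_left hNE
        (Set.disjoint_insert_left.mpr ⟨he j, hF.pairwise_disjoint hj.symm⟩)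
    intro j l hjl
    by_cases hj : j = i <;> by_cases hl : l = i
    · exact absurd (hj.trans hl.symm) hjl
    · subst hj; simpa [hl] using hN l hl
    · subst hl; simpa [hj] using (hN j hj).symm
    · simpa [hj, hl] using hF.pairwise_disjoint hjl

lemma packingSize_update [Fintype ι] (F : ι → SimpleGraph V) (i : ι) (N : SimpleGraph V) :
    packingSize (Function.update F i N) + (F i).edgeSet.ncard =
      packingSize F + N.edgeSet.ncard := by
  have hupdate := Finset.add_sum_erase Finset.univ
    (fun j => (Function.update F i N j).edgeSet.ncard) (Finset.mem_univ i)
  have hold := Finset.add_sum_erase Finset.univ (fun j => (F j).edgeSet.ncard) (Finset.mem_univ i)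
  have hrest : ∑ j ∈ Finset.univ.erase i, (Function.update F i N j).edgeSet.ncard =
      ∑ j ∈ Finset.univ.erase i, (F j).edgeSet.ncard :=
    Finset.sum_congr rfl fun j hj => by rw [Function.update_of_ne (Finset.ne_of_mem_erase hj)]
  simp only [Function.update_self] at hupdate
  unfold packingSize
  omega

def exchange (F : ι → SimpleGraph V) (i : ι) (f : Sym2 V) (x y : V) : ι → SimpleGraph V :=
  Function.update F i ((F i).deleteEdges {f} ⊔ edge x y)

lemma IsForestPacking.isFreeEdge_exchange (hF : IsForestPacking G F) (he : IsFreeEdge G F s(x, y))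
    {i : ι} {f : Sym2 V} (hf : f ∈ (F i).edgeSet) : IsFreeEdge G (exchange F i f x y) f := by
  refine ⟨edgeSet_mono (hF.le i) hf, fun j => ?_⟩
  rcases eq_or_ne j i with rfl | hj
  · rw [exchange, Function.update_self,
      edgeSet_deleteEdges_sup_edge _ _ (G.mem_edgeSet.mp he.1).ne]
    rintro (h | ⟨-, h⟩)
    exacts [he.2 j (h ▸ hf), h rfl]
  · simpa [exchange, hj] using Set.disjoint_right.mp (hF.pairwise_disjoint hj) hf

variable [Fintype ι] [Finite V]

lemma IsMaxForestPacking.reachable (hF : IsMaxForestPacking G F) (he : IsFreeEdge G F s(x, y))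
    (i : ι) : (F i).Reachable x y := by
  by_contra h
  have hxy : G.Adj x y := he.1
  have hE : (F i ⊔ edge x y).edgeSet = insert s(x, y) (F i).edgeSet := by
    rw [edgeSet_sup, edgeSet_edge_of_ne hxy.ne, Set.union_singleton]
  have hsize := hF.2 _ <| hF.1.update he.2 i (sup_le (hF.1.le i) ((edge_le_iff G).mpr (.inr hxy)))
    ((hF.1.isAcyclic i).sup_edge_of_not_reachable h) hE.le
  have := packingSize_update F i (F i ⊔ edge x y)
  rw [hE, Set.ncard_insert_of_notMem (he.2 i)] at this
  omega

lemma IsMaxForestPacking.isMaxForestPacking_exchange (hF : IsMaxForestPacking G F)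
    (he : IsFreeEdge G F s(x, y)) {i : ι} {f : Sym2 V} (hf : f ∈ (F i).edgeSet)
    (hcut : ¬((F i).deleteEdges {f}).Reachable x y) :
    IsMaxForestPacking G (exchange F i f x y) := by
  have hxy : G.Adj x y := he.1
  have hE := edgeSet_deleteEdges_sup_edge (F i) f hxy.ne
  have hpack : IsForestPacking G (exchange F i f x y) := hF.1.update he.2 i
    (sup_le ((deleteEdges_le _).trans (hF.1.le i)) ((edge_le_iff G).mpr (.inr hxy)))
    (((hF.1.isAcyclic i).anti (deleteEdges_le _)).sup_edge_of_not_reachable hcut)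
    (hE.trans_subset (Set.insert_subset_insert Set.sdiff_subset))
  have hsize : packingSize (exchange F i f x y) + _ = _ := packingSize_update F i _
  rw [hE, Set.ncard_insert_of_notMem (fun h => he.2 i h.1), Set.ncard_sdiff_singleton_add_one hf]
    at hsize
  exact ⟨hpack, fun F' hF' => by have := hF.2 F' hF'; omega⟩

end ForestPacking

section Exchange

variable {V : Type*} [Finite V] {G : SimpleGraph V} {x y : V}
  {ι : Type*} [Fintype ι] [DecidableEq ι] {F : ι → SimpleGraph V}

/-- The step exchanges the free edge `s(x, y)` with an edge `f` of the cycle it closes in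
`F i`. -/
inductive ExchangeReachable (F₀ : ι → SimpleGraph V) (e₀ : Sym2 V) :
    (ι → SimpleGraph V) → Sym2 V → Prop
  | refl : ExchangeReachable F₀ e₀ F₀ e₀
  | tail {F : ι → SimpleGraph V} {x y : V} {i : ι} {f : Sym2 V} :
      ExchangeReachable F₀ e₀ F s(x, y) → f ∈ (F i).edgeSet →
      ¬((F i).deleteEdges {f}).Reachable x y → ExchangeReachable F₀ e₀ (exchange F i f x y) f

def exchangeGraph (F₀ : ι → SimpleGraph V) (e₀ : Sym2 V) : SimpleGraph V :=
  fromEdgeSet {e | ∃ F, ExchangeReachable F₀ e₀ F e}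

namespace ExchangeReachable

variable {F₀ : ι → SimpleGraph V} {e₀ e : Sym2 V}
  (hF₀ : IsMaxForestPacking G F₀) (he₀ : IsFreeEdge G F₀ e₀)
include hF₀ he₀

lemma isMaxForestPacking_and_isFreeEdge (h : ExchangeReachable F₀ e₀ F e) :
    IsMaxForestPacking G F ∧ IsFreeEdge G F e := by
  induction h with
  | refl => exact ⟨hF₀, he₀⟩
  | tail _ hf hcut ih =>
    exact ⟨ih.1.isMaxForestPacking_exchange ih.2 hf hcut, ih.1.1.isFreeEdge_exchange ih.2 hf⟩

lemma reachable_inf_exchangeGraph (h : ExchangeReachable F₀ e₀ F s(x, y)) (i : ι) :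
    (F i ⊓ exchangeGraph F₀ e₀).Reachable x y := by
  obtain ⟨hF, he⟩ := h.isMaxForestPacking_and_isFreeEdge hF₀ he₀
  obtain ⟨p, hp⟩ := (hF.reachable he i).exists_isPath
  -- each edge of the path lies on the cycle closed by `s(x, y)`, so it can be exchanged for it
  refine ⟨p.transfer _ fun f hf => ?_⟩
  have hfF : f ∈ (F i).edgeSet := p.edges_subset_edgeSet hf
  have hR := h.tail hfF ((hF.1.isAcyclic i).not_reachable_deleteEdges_of_mem_edges hp hf)
  rw [edgeSet_inf, exchangeGraph, edgeSet_fromEdgeSet]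
  exact ⟨hfF, ⟨_, hR⟩, (F i).not_isDiag_of_mem_edgeSet hfF⟩

lemma reachable_inf_exchangeGraph_initial (h : ExchangeReachable F₀ e₀ F e) {i : ι} {u v : V}
    (huv : (F i ⊓ exchangeGraph F₀ e₀).Reachable u v) :
    (F₀ i ⊓ exchangeGraph F₀ e₀).Reachable u v := by
  induction h generalizing u v with
  | refl => exact huv
  | @tail F x y j f hR hf hcut ih =>
    -- the step only adds `s(x, y)`, whose ends are already joined by exchangeable edges in `F i`
    refine ih (huv.of_le_sup_edge ?_ (hR.reachable_inf_exchangeGraph hF₀ he₀ i))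
    have hle : exchange F j f x y i ≤ F i ⊔ edge x y := by
      rcases eq_or_ne i j with rfl | hij
      · simpa [exchange] using sup_le_sup_right (deleteEdges_le _) _
      · simp [exchange, hij]
    calc _ ≤ (F i ⊔ edge x y) ⊓ exchangeGraph F₀ e₀ := inf_le_inf_right _ hle
      _ = F i ⊓ exchangeGraph F₀ e₀ ⊔ edge x y ⊓ exchangeGraph F₀ e₀ :=
        inf_sup_right ..
      _ ≤ F i ⊓ exchangeGraph F₀ e₀ ⊔ edge x y := sup_le_sup_left inf_le_left _

end ExchangeReachable

theorem IsMaxForestPacking.exists_connectsComponents (hF : IsMaxForestPacking G F)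
    (he : IsFreeEdge G F s(x, y)) : ∃ K, ConnectsComponents F K ∧ K.Reachable x y := by
  refine ⟨exchangeGraph F s(x, y), fun i u v huv => huv.of_forall_adj fun a b hab => ?_, ?_⟩
  · obtain ⟨⟨F', hF'⟩, -⟩ := hab
    exact hF'.reachable_inf_exchangeGraph_initial hF he
      (hF'.reachable_inf_exchangeGraph hF he i)
  · exact Adj.reachable ⟨⟨F, .refl⟩, (G.mem_edgeSet.mp he.1).ne⟩

end Exchange

section CrossingEdges

open Finset

variable {V : Type*} [Fintype V] {G H K : SimpleGraph V} {u v : V} {α : Type*} {c : V → α}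

open Classical in
noncomputable def crossingEdges (H : SimpleGraph V) (c : V → α) : Finset (Sym2 V) :=
  {e | e ∈ H.edgeSet ∧ ¬(e.map c).IsDiag}

lemma mem_crossingEdges {e : Sym2 V} :
    e ∈ H.crossingEdges c ↔ e ∈ H.edgeSet ∧ ¬(e.map c).IsDiag := by
  simp [crossingEdges]

@[simp] lemma mk_mem_crossingEdges :
    s(u, v) ∈ H.crossingEdges c ↔ H.Adj u v ∧ c u ≠ c v := by
  simp [crossingEdges]

/-- `G.crossingEdges (c · = a)` is the set of edges leaving the class `a`, and a crossing edge
leaves exactly two classes. -/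
lemma sum_card_crossingEdges_fiber_le [DecidableEq α] (G : SimpleGraph V) (c : V → α) :
    ∑ a ∈ univ.image c, #(G.crossingEdges (c · = a)) ≤ 2 * #(G.crossingEdges c) := by
  classical
  have hsub (a : α) : G.crossingEdges (c · = a) ⊆ G.crossingEdges c := by
    intro e
    induction e using Sym2.ind with
    | _ u v => simpa using fun hadj hne => ⟨hadj, fun h => hne (by rw [h])⟩
  calc ∑ a ∈ univ.image c, #(G.crossingEdges (c · = a))
      = ∑ a ∈ univ.image c,
          #((G.crossingEdges c).bipartiteAbove
            (fun a e => e ∈ G.crossingEdges (c · = a)) a) := by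
        refine sum_congr rfl fun a _ => ?_
        rw [bipartiteAbove, filter_mem_eq_inter, inter_eq_right.mpr (hsub a)]
    _ = ∑ e ∈ G.crossingEdges c,
          #((univ.image c).bipartiteBelow (fun a e => e ∈ G.crossingEdges (c · = a)) e) :=
        sum_card_bipartiteAbove_eq_sum_card_bipartiteBelow _
    _ ≤ ∑ _e ∈ G.crossingEdges c, 2 := sum_le_sum fun e _ => by
        induction e using Sym2.ind with
        | _ u v =>
          refine (card_le_card fun a ha => ?_).trans (card_le_two (a := c u) (b := c v))
          simp only [bipartiteBelow, mem_filter, mk_mem_crossingEdges] at ha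
          simp only [mem_insert, mem_singleton]
          tauto
    _ = 2 * #(G.crossingEdges c) := by rw [sum_const, smul_eq_mul, mul_comm]

/-- Two classes of `c` that are connected inside by `K ≤ H` are joined by at most one edge of the
forest `H`. -/
lemma IsAcyclic.eq_of_mem_crossingEdges (hH : H.IsAcyclic) (hKH : K ≤ H)
    (hKc : ∀ u v, K.Adj u v → c u = c v) (huv : s(u, v) ∈ H.crossingEdges c) {a b : V}
    (hab : H.Adj a b) (hua : K.Reachable u a) (hbv : K.Reachable b v) : s(u, v) = s(a, b) := by
  obtain ⟨huv, hc⟩ := mk_mem_crossingEdges.mp huv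
  by_contra hne
  refine isBridge_iff.mp (isAcyclic_iff_forall_isBridge.mp hH (H.mem_edgeSet.mpr huv)) ?_
  have hK : K ≤ H.deleteEdges {s(u, v)} := fun x y hxy => by
    refine (deleteEdges_adj ..).mpr ⟨hKH hxy, fun h => hc ?_⟩
    rcases Sym2.eq_iff.mp h with ⟨rfl, rfl⟩ | ⟨rfl, rfl⟩
    exacts [hKc _ _ hxy, (hKc _ _ hxy).symm]
  have hab' : (H.deleteEdges {s(u, v)}).Adj a b := (deleteEdges_adj ..).mpr ⟨hab, Ne.symm hne⟩
  exact (hua.mono hK).trans (hab'.reachable.trans (hbv.mono hK))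

variable [DecidableEq α]

def mergeLabels (c : V → α) (a b : V) : V → α := fun v => if c v = c b then c a else c v

lemma card_image_mergeLabels (c : V → α) {a b : V} (hab : c a ≠ c b) :
    #(univ.image (mergeLabels c a b)) + 1 = #(univ.image c) := by
  have himage : univ.image (mergeLabels c a b) = (univ.image c).erase (c b) := by
    ext t
    simp only [mergeLabels, mem_image, mem_univ, true_and, mem_erase]
    constructor
    · rintro ⟨v, rfl⟩
      split_ifs with hv
      exacts [⟨hab, a, rfl⟩, ⟨hv, v, rfl⟩]
    · rintro ⟨ht, v, rfl⟩
      exact ⟨v, if_neg ht⟩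
  rw [himage, card_erase_add_one (mem_image_of_mem c (mem_univ b))]

lemma IsAcyclic.card_crossingEdges_mergeLabels (hH : H.IsAcyclic) (hKH : K ≤ H)
    (hcK : ∀ u v, c u = c v → K.Reachable u v) (hKc : ∀ u v, K.Adj u v → c u = c v)
    {a b : V} (hab : s(a, b) ∈ H.crossingEdges c) :
    #(H.crossingEdges (mergeLabels c a b)) + 1 = #(H.crossingEdges c) := by
  classical
  suffices H.crossingEdges (mergeLabels c a b) = (H.crossingEdges c).erase s(a, b) by
    rw [this, card_erase_add_one hab]
  have hadj := (mk_mem_crossingEdges.mp hab).1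
  ext e
  induction e using Sym2.ind with
  | _ u v =>
  simp only [mem_erase, mk_mem_crossingEdges]
  constructor
  · rintro ⟨huv, hne⟩
    refine ⟨fun h => ?_, huv, fun h => hne (by simp [mergeLabels, h])⟩
    rcases Sym2.eq_iff.mp h with ⟨rfl, rfl⟩ | ⟨rfl, rfl⟩ <;> simp [mergeLabels] at hne
  · rintro ⟨hne, huv, hc⟩
    refine ⟨huv, fun h => hne ?_⟩
    simp only [mergeLabels] at h
    split_ifs at h with hu hv hv
    · exact absurd (hu.trans hv.symm) hc
    · rw [Sym2.eq_swap]
      exact hH.eq_of_mem_crossingEdges hKH hKc (mk_mem_crossingEdges.mpr ⟨huv.symm, hc.symm⟩)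
        hadj (hcK v a h.symm) (hcK b u hu.symm)
    · exact hH.eq_of_mem_crossingEdges hKH hKc (mk_mem_crossingEdges.mpr ⟨huv, hc⟩)
        hadj (hcK u a h) (hcK b v hv.symm)
    · exact absurd h hc

theorem IsAcyclic.card_crossingEdges_lt [Nonempty V] (hH : H.IsAcyclic) (hKH : K ≤ H)
    (hcK : ∀ u v, c u = c v → K.Reachable u v) (hKc : ∀ u v, K.Adj u v → c u = c v) :
    #(H.crossingEdges c) < #(univ.image c) := by
  induction hn : #(H.crossingEdges c) generalizing c K with
  | zero => simp [card_pos, univ_nonempty]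
  | succ n ih =>
    -- merge the two classes joined by a crossing edge `s(a, b)`, adding the edge to `K`
    obtain ⟨e, he⟩ : (H.crossingEdges c).Nonempty := card_pos.mp (by omega)
    induction e using Sym2.ind with
    | _ a b =>
    obtain ⟨hab, hcab⟩ := mk_mem_crossingEdges.mp he
    have hK : ∀ u v, c u = c v → (K ⊔ edge a b).Reachable u v := fun u v h =>
      (hcK u v h).mono le_sup_left
    have hab' : (K ⊔ edge a b).Reachable a b :=
      Adj.reachable (Or.inr ((edge_adj ..).mpr ⟨Or.inl ⟨rfl, rfl⟩, hab.ne⟩))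
    have hcK' : ∀ u v, mergeLabels c a b u = mergeLabels c a b v →
        (K ⊔ edge a b).Reachable u v := by
      intro u v h
      simp only [mergeLabels] at h
      split_ifs at h with hu hv hv
      · exact hK u v (hu.trans hv.symm)
      · exact (hK u b hu).trans (hab'.symm.trans (hK a v h))
      · exact (hK u a h).trans (hab'.trans (hK b v hv.symm))
      · exact hK u v h
    have hKc' : ∀ u v, (K ⊔ edge a b).Adj u v →
        mergeLabels c a b u = mergeLabels c a b v := by
      rintro u v (h | h)
      · simp [mergeLabels, hKc u v h]
      · obtain ⟨⟨rfl, rfl⟩ | ⟨rfl, rfl⟩, -⟩ := (edge_adj ..).mp h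
        all_goals simp [mergeLabels]
    have := ih (sup_le hKH ((edge_le_iff H).mpr (.inr hab))) hcK' hKc'
      (by have := hH.card_crossingEdges_mergeLabels hKH hcK hKc he; omega)
    have := card_image_mergeLabels c hcab
    omega

end CrossingEdges

section SpanningTrees

open Finset

variable {V : Type} [Fintype V] {G : SimpleGraph V} {α : Type*} {c : V → α} {u v : V}
  {ι : Type*} [Fintype ι] {F : ι → SimpleGraph V}

theorem _root_.IsKEdgeConnected.le_card_crossingEdges {k : ℕ} (hG : IsKEdgeConnected G k)
    (huv : c u ≠ c v) : k ≤ #(G.crossingEdges c) := by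
  by_contra! h
  obtain ⟨p⟩ := (hG _ h).preconnected u v
  obtain ⟨d, -, hd, hd'⟩ := p.exists_boundary_dart {w | c w = c u} rfl huv.symm
  obtain ⟨hadj, hnot⟩ := (deleteEdges_adj ..).mp d.adj
  exact hnot (mk_mem_crossingEdges.mpr ⟨hadj, fun h => hd' (h.symm.trans hd)⟩)

theorem IsForestPacking.eq_of_covers_crossingEdges [Nonempty ι]
    (hG : IsKEdgeConnected G (2 * Fintype.card ι)) (hF : IsForestPacking G F) {K : SimpleGraph V}
    (hcK : ∀ i u v, c u = c v → (F i ⊓ K).Reachable u v)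
    (hKc : ∀ u v, K.Adj u v → c u = c v)
    (hcover : ∀ e ∈ G.crossingEdges c, ∃ i, e ∈ (F i).edgeSet) (u v : V) : c u = c v := by
  classical
  by_contra huv
  have : Nonempty V := ⟨u⟩
  have hlow : ∑ _a ∈ univ.image c, 2 * Fintype.card ι ≤ 2 * #(G.crossingEdges c) := by
    refine (sum_le_sum fun a ha => ?_).trans (sum_card_crossingEdges_fiber_le G c)
    obtain ⟨w, -, rfl⟩ := mem_image.mp ha
    obtain ⟨y, hy⟩ : ∃ y, c y ≠ c w := by
      by_cases hu : c u = c w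
      exacts [⟨v, fun h => huv (hu.trans h.symm)⟩, ⟨u, hu⟩]
    exact hG.le_card_crossingEdges (c := (c · = c w)) (u := w) (v := y) (by simpa using hy)
  have hup : #(G.crossingEdges c) + Fintype.card ι ≤ ∑ _i : ι, #(univ.image c) :=
    calc #(G.crossingEdges c) + Fintype.card ι
        ≤ #(univ.biUnion fun i => (F i).crossingEdges c) + Fintype.card ι := by
          gcongr
          intro e he
          obtain ⟨i, hi⟩ := hcover e he
          exact mem_biUnion.mpr
            ⟨i, mem_univ i, mem_crossingEdges.mpr ⟨hi, (mem_crossingEdges.mp he).2⟩⟩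
      _ ≤ ∑ i, (#((F i).crossingEdges c) + 1) := by
          rw [sum_add_distrib, sum_const, card_univ, smul_eq_mul, mul_one]
          gcongr
          exact card_biUnion_le
      _ ≤ ∑ _i : ι, #(univ.image c) := sum_le_sum fun i _ =>
          (hF.isAcyclic i).card_crossingEdges_lt inf_le_left (hcK i) fun u v h => hKc u v h.2
  simp only [sum_const, smul_eq_mul, card_univ] at hlow hup
  nlinarith [Fintype.card_pos (α := ι)]

theorem IsMaxForestPacking.connected [Nonempty ι] [DecidableEq ι]
    (hG : IsKEdgeConnected G (2 * Fintype.card ι)) (hF : IsMaxForestPacking G F) (i : ι) :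
    (F i).Connected := by
  have : Nonempty V := (hG ∅ (by simp [Fintype.card_pos])).nonempty
  set K := sSup {K | ConnectsComponents F K}
  have hK : ConnectsComponents F K := connectsComponents_sSup F
  have hcover : ∀ e ∈ G.crossingEdges K.connectedComponentMk, ∃ j, e ∈ (F j).edgeSet := by
    intro e he
    induction e using Sym2.ind with
    | _ u v =>
    by_contra! hfree
    obtain ⟨hadj, huv⟩ := mk_mem_crossingEdges.mp he
    obtain ⟨K', hK', hreach⟩ := hF.exists_connectsComponents ⟨hadj, hfree⟩
    exact huv (ConnectedComponent.eq.mpr (hreach.mono (le_sSup hK')))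
  have hc := hF.1.eq_of_covers_crossingEdges hG (fun j u v h => hK j (ConnectedComponent.eq.mp h))
    (fun u v h => ConnectedComponent.eq.mpr h.reachable) hcover
  exact (connected_iff _).mpr
    ⟨fun u v => (hK i (ConnectedComponent.eq.mp (hc u v))).mono inf_le_left, inferInstance⟩

end SpanningTrees

end SimpleGraph

/-- Nash-Williams; Tutte: every `2k`-edge-connected finite graph contains `k`
pairwise edge-disjoint spanning trees. -/
theorem edge_disjoint_spanning_trees {V : Type} [Fintype V] (k : ℕ)
    (G : SimpleGraph V) (hG : IsKEdgeConnected G (2 * k)) :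
    ∃ H : Fin k → SimpleGraph V,
      (∀ i, H i ≤ G ∧ (H i).IsTree) ∧
      (∀ i j, i ≠ j → Disjoint (H i).edgeSet (H j).edgeSet) := by
  rcases k.eq_zero_or_pos with rfl | hk
  · exact ⟨finZeroElim, finZeroElim, finZeroElim⟩
  have : Nonempty (Fin k) := ⟨⟨0, hk⟩⟩
  obtain ⟨F, hF⟩ := exists_isMaxForestPacking (ι := Fin k) G
  have hG' : IsKEdgeConnected G (2 * Fintype.card (Fin k)) := by rwa [Fintype.card_fin]
  exact ⟨F, fun i => ⟨hF.1.le i, hF.connected hG' i, hF.1.isAcyclic i⟩,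
    fun _ _ h => hF.1.pairwise_disjoint h⟩
end

section
/- If G is a 2k-regular finite multigraph, then G admits a decomposition into 2-factors, i.e., its edge set can be partitioned into k sets each of which induces a 2-regular spanning subgraph of G. -/
/-! Petersen's argument. As all degrees are even, `G` has an Eulerian orientation, in which every
vertex has `k` outgoing and `k` incoming edges. The arc counts `D u v` then form a matrix with all row
and column sums `k`, which by Hall's theorem is a sum of `k` permutation matrices. Each of these
permutations `σ` is fixed-point free because `G` has no loops, and the edges `{u, σ u}` form a
`2`-factor. -/

open Finset

namespace Multigraph

section

variable {V : Type}

/-- `D u v` counts the edges between `u` and `v` oriented from `u` to `v`. -/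
def IsOrientation (G : Multigraph V) (D : V → V → ℕ) : Prop :=
  ∀ u v, D u v + D v u = G.mult u v

theorem ne_of_mult_ne_zero (G : Multigraph V) {x z : V} (h : G.mult x z ≠ 0) : x ≠ z := by
  rintro rfl
  exact h (G.loopless x)

theorem IsOrientation.sum_add_sum [Fintype V] {G : Multigraph V} {D : V → V → ℕ}
    (hD : G.IsOrientation D) (v : V) : ∑ u, D v u + ∑ u, D u v = G.degree v := by
  rw [degree, ← sum_add_distrib]
  exact sum_congr rfl fun u _ => hD v u

variable [DecidableEq V]

def eraseEdge (G : Multigraph V) (x z : V) : Multigraph V where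
  mult u v := G.mult u v - ((if u = x ∧ v = z then 1 else 0) + if v = x ∧ u = z then 1 else 0)
  symm u v := by rw [G.symm, add_comm]
  loopless v := by simp [G.loopless]

theorem eraseEdge_mult_add (G : Multigraph V) {x z : V} (h : G.mult x z ≠ 0) (u v : V) :
    (G.eraseEdge x z).mult u v + ((if u = x ∧ v = z then 1 else 0) + if v = x ∧ u = z then 1 else 0)
      = G.mult u v := by
  have hxz := G.ne_of_mult_ne_zero h
  have := G.symm x z
  simp only [eraseEdge]
  split_ifs <;> grind

def ofPerm (σ : Equiv.Perm V) (hσ : ∀ v, σ v ≠ v) : Multigraph V where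
  mult u v := (if σ u = v then 1 else 0) + if σ v = u then 1 else 0
  symm _ _ := add_comm _ _
  loopless v := by simp [hσ v]

variable [Fintype V]

theorem degree_eraseEdge_add (G : Multigraph V) {x z : V} (h : G.mult x z ≠ 0) (v : V) :
    (G.eraseEdge x z).degree v + (if v = x then 1 else 0) + (if v = z then 1 else 0) =
      G.degree v := by
  have hsum : (∑ u, ((if v = x ∧ u = z then 1 else 0) + if u = x ∧ v = z then 1 else 0)) =
      (if v = x then 1 else 0) + (if v = z then 1 else 0) := by
    simp [sum_add_distrib, ite_and]
  rw [add_assoc, ← hsum, degree, degree, ← sum_add_distrib]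
  exact sum_congr rfl fun u _ => G.eraseEdge_mult_add h v u

theorem IsOrientation.of_eraseEdge {G : Multigraph V} {x y z : V} (hxz : G.mult x z ≠ 0)
    {D : V → V → ℕ} (hD : (G.eraseEdge x z).IsOrientation D)
    (hbal : ∀ v, ∑ u, D v u + (if v = y then 1 else 0) = ∑ u, D u v + if v = z then 1 else 0) :
    ∃ D' : V → V → ℕ, G.IsOrientation D' ∧
      ∀ v, ∑ u, D' v u + (if v = y then 1 else 0) = ∑ u, D' u v + if v = x then 1 else 0 := by
  refine ⟨fun u v => D u v + if u = x ∧ v = z then 1 else 0, fun u v => ?_, fun v => ?_⟩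
  · rw [← G.eraseEdge_mult_add hxz u v, ← hD u v]
    ring
  · have := hbal v
    simp only [ite_and, sum_add_distrib, sum_ite_irrel, sum_ite_eq', mem_univ, ↓reduceIte,
      sum_const_zero]
    omega

/-- An orientation of `G` together with one extra arc from `y` to `x` in which every vertex is
balanced; for `x = y` this is an Eulerian orientation of `G`. The extra arc is what makes the
induction on the number of edges go through: erasing an edge `xz` moves its head from `x` to `z`. -/
theorem exists_orientation_of_even (G : Multigraph V) (x y : V)
    (hpar : ∀ v, Even (G.degree v + (if v = x then 1 else 0) + if v = y then 1 else 0)) :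
    ∃ D : V → V → ℕ, G.IsOrientation D ∧
      ∀ v, ∑ u, D v u + (if v = y then 1 else 0) = ∑ u, D u v + if v = x then 1 else 0 := by
  induction hn : ∑ v, G.degree v using Nat.strong_induction_on generalizing G x y with
  | _ n ih =>
  have step (x y z : V) (hxz : G.mult x z ≠ 0)
      (hpar : ∀ v, Even (G.degree v + (if v = x then 1 else 0) + if v = y then 1 else 0)) :
      ∃ D : V → V → ℕ, G.IsOrientation D ∧
        ∀ v, ∑ u, D v u + (if v = y then 1 else 0) = ∑ u, D u v + if v = x then 1 else 0 := by
    have hdeg := G.degree_eraseEdge_add hxz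
    have hlt : ∑ v, (G.eraseEdge x z).degree v < n := by
      rw [← hn, ← sum_congr rfl fun v _ => hdeg v]
      simp [sum_add_distrib]
    obtain ⟨D, hD, hbal⟩ := ih _ hlt (G.eraseEdge x z) z y (fun v => by
      have := hpar v; have := hdeg v
      rw [Nat.even_iff] at *; split_ifs at * <;> omega) rfl
    exact hD.of_eraseEdge hxz hbal
  by_cases hx : ∃ z, G.mult x z ≠ 0
  · obtain ⟨z, hxz⟩ := hx
    exact step x y z hxz hpar
  push Not at hx
  obtain rfl : x = y := by
    have hx0 : G.degree x = 0 := sum_eq_zero fun z _ => hx z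
    have := hpar x
    by_contra hxy
    simp [hx0, hxy] at this
  by_cases hG : ∃ a b, G.mult a b ≠ 0
  · obtain ⟨a, b, hab⟩ := hG
    obtain ⟨D, hD, hbal⟩ := step a a b hab fun v => by
      have := hpar v
      rw [Nat.even_iff] at *
      split_ifs at * <;> omega
    exact ⟨D, hD, fun v => by have := hbal v; omega⟩
  push Not at hG
  exact ⟨0, fun u v => (hG u v).symm, fun v => rfl⟩

theorem exists_regular_orientation {k : ℕ} (G : Multigraph V) (hreg : ∀ v, G.degree v = 2 * k) :
    ∃ D : V → V → ℕ, G.IsOrientation D ∧ (∀ v, ∑ u, D v u = k) ∧ ∀ v, ∑ u, D u v = k := by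
  cases isEmpty_or_nonempty V
  · exact ⟨0, fun u => isEmptyElim u, fun v => isEmptyElim v, fun v => isEmptyElim v⟩
  obtain ⟨x⟩ := ‹Nonempty V›
  obtain ⟨D, hD, hbal⟩ := G.exists_orientation_of_even x x fun v => by
    rw [hreg, add_assoc, ← two_mul, ← mul_add]
    exact even_two_mul _
  have hdeg (v : V) := (hD.sum_add_sum v).trans (hreg v)
  have hbal' (v : V) : ∑ u, D v u = ∑ u, D u v := Nat.add_right_cancel (hbal v)
  exact ⟨D, hD, fun v => by linarith [hdeg v, hbal' v], fun v => by linarith [hdeg v, hbal' v]⟩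

theorem degree_ofPerm (σ : Equiv.Perm V) (hσ : ∀ v, σ v ≠ v) (v : V) :
    (ofPerm σ hσ).degree v = 2 := by
  have hin : ∑ u, (if σ u = v then 1 else 0) = 1 :=
    (Equiv.sum_comp σ fun u => if u = v then 1 else 0).trans (by simp)
  simp [degree, ofPerm, sum_add_distrib, hin]

end

end Multigraph

section PermDecomposition

variable {V : Type} [Fintype V] [DecidableEq V]

theorem exists_perm_forall_ne_zero (D : V → V → ℕ) {s : ℕ} (hs : 0 < s)
    (hrow : ∀ v, ∑ u, D v u = s) (hcol : ∀ v, ∑ u, D u v = s) :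
    ∃ σ : Equiv.Perm V, ∀ v, D v (σ v) ≠ 0 := by
  let N : V → Finset V := fun v => {u | D v u ≠ 0}
  have hall (A : Finset V) : #A ≤ #(A.biUnion N) := by
    have hA : ∑ v ∈ A, ∑ u ∈ A.biUnion N, D v u = s * #A := by
      rw [sum_congr rfl fun v hv => ?_, sum_const, smul_eq_mul, mul_comm]
      rw [← hrow v]
      refine sum_subset (subset_univ _) fun u _ hu => ?_
      by_contra h
      exact hu (mem_biUnion.2 ⟨v, hv, by simpa [N] using h⟩)
    have hNA : s * #A ≤ s * #(A.biUnion N) := calc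
      s * #A = ∑ u ∈ A.biUnion N, ∑ v ∈ A, D v u := by rw [← hA, sum_comm]
      _ ≤ ∑ u ∈ A.biUnion N, ∑ v, D v u := by gcongr; exact subset_univ _
      _ = s * #(A.biUnion N) := by simp [hcol, mul_comm]
    exact Nat.le_of_mul_le_mul_left hNA hs
  obtain ⟨f, hf, hfN⟩ := (all_card_le_biUnion_card_iff_exists_injective N).1 hall
  exact ⟨Equiv.ofBijective f (Finite.injective_iff_bijective.1 hf),
    fun v => by simpa [N] using hfN v⟩

theorem exists_perms_card_filter_eq (k : ℕ) (D : V → V → ℕ)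
    (hrow : ∀ v, ∑ u, D v u = k) (hcol : ∀ v, ∑ u, D u v = k) :
    ∃ σ : Fin k → Equiv.Perm V, ∀ u v, #{i | σ i u = v} = D u v := by
  induction k generalizing D with
  | zero =>
    refine ⟨finZeroElim, fun u v => ?_⟩
    have huv : D u v = 0 := sum_eq_zero_iff.1 (hrow u) v (mem_univ v)
    simp [huv]
  | succ k ih =>
    obtain ⟨τ, hτ⟩ := exists_perm_forall_ne_zero D k.succ_pos hrow hcol
    set P : V → V → ℕ := fun u v => if τ u = v then 1 else 0
    have hP : ∀ u v, P u v ≤ D u v := by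
      intro u v
      by_cases h : τ u = v
      · subst h; simpa [P, Nat.one_le_iff_ne_zero] using hτ u
      · simp [P, h]
    obtain ⟨σ, hσ⟩ := ih (fun u v => D u v - P u v)
      (fun v => by
        rw [sum_tsub_distrib _ fun u _ => hP v u, hrow]
        simp [P])
      (fun v => by
        rw [sum_tsub_distrib _ fun u _ => hP u v, hcol]
        simp [P, ← τ.eq_symm_apply])
    refine ⟨Fin.cons τ σ, fun u v => ?_⟩
    rw [Fin.card_filter_univ_succ']
    simp only [Fin.cons_zero, Fin.cons_succ, hσ]
    have := hP u v
    simp only [P] at this ⊢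
    omega

end PermDecomposition

/-- Petersen: every `2k`-regular finite multigraph admits a decomposition into `k`
`2`-factors: its edge multiset can be partitioned into `k` spanning `2`-regular
sub-multigraphs. -/
theorem petersen_two_factorization {V : Type} [Fintype V]
    (k : ℕ) (G : Multigraph V) (hreg : ∀ v, G.degree v = 2 * k) :
    ∃ F : Fin k → Multigraph V,
      (∀ u w, (∑ i, (F i).mult u w) = G.mult u w) ∧
      (∀ i v, (F i).degree v = 2) := by
  classical
  obtain ⟨D, hD, hout, hin⟩ := G.exists_regular_orientation hreg
  obtain ⟨σ, hσ⟩ := exists_perms_card_filter_eq k D hout hin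
  have hfix (i : Fin k) (v : V) : σ i v ≠ v := by
    have hDvv : D v v = 0 := by linarith [hD v v, G.loopless v]
    rw [← hσ, card_eq_zero, filter_eq_empty_iff] at hDvv
    exact hDvv (mem_univ i)
  refine ⟨fun i => Multigraph.ofPerm (σ i) (hfix i), fun u w => ?_,
    fun i v => Multigraph.degree_ofPerm _ _ _⟩
  simp only [Multigraph.ofPerm, sum_add_distrib, ← card_filter, hσ]
  exact hD u w
end

section
/- A connected finite simple graph G admits a decomposition into paths of length 2 if and only if G has an even number of edges. -/
open SimpleGraph

/-- `D` is a decomposition of `G` into copies of `T`: a set of pairwise edge-disjoint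
subgraphs of `G`, each isomorphic to `T`, whose union is `G`. -/
def IsDecompInto {V W : Type} (G : SimpleGraph V) (T : SimpleGraph W)
    (D : Set G.Subgraph) : Prop :=
  (∀ H ∈ D, Nonempty (H.coe ≃g T)) ∧
  (∀ H ∈ D, ∀ K ∈ D, H ≠ K → Disjoint H.edgeSet K.edgeSet) ∧
  (⋃ H ∈ D, H.edgeSet) = G.edgeSet

/-!
Evenness is necessary because every path of length two has two edges. Conversely, fix a root `r`
and repeatedly delete two edges sharing a vertex, keeping every non-isolated vertex reachable from
`r`. Such a pair exists near a vertex `v` at maximal distance from `r`: if some vertex at that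
distance has two neighbours, delete two of its edges; otherwise `v` is a leaf hanging from some `u`,
and we delete `uv` together with an edge `uw`, where `w` is another leaf at maximal distance if
there is one. In each case a shortest path from `r` to a vertex that keeps an edge avoids the
deleted edges.
-/

namespace SimpleGraph

variable {V : Type*} {G : SimpleGraph V} {r x y : V}

lemma Walk.dist_add_dist_le_of_mem_support [DecidableEq V] (p : G.Walk r x)
    (hp : p.length = G.dist r x) (hy : y ∈ p.support) :
    G.dist r y + G.dist y x ≤ G.dist r x := by
  have := dist_le (p.takeUntil y hy)
  have := dist_le (p.dropUntil y hy)
  have := congrArg Walk.length (p.take_spec hy)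
  rw [Walk.length_append] at this
  omega

lemma Walk.notMem_support_of_dist_le (p : G.Walk r x) (hp : p.length = G.dist r x)
    (hxy : x ≠ y) (hle : G.dist r x ≤ G.dist r y) : y ∉ p.support := by
  classical
  intro hy
  have := p.dist_add_dist_le_of_mem_support hp hy
  have := (p.dropUntil y hy).reachable.pos_dist_of_ne hxy.symm
  omega

lemma Walk.reachable_deleteEdges {u v : V} (p : G.Walk u v) {s : Set (Sym2 V)}
    (hs : ∀ e ∈ s, ∃ y ∈ e, y ∉ p.support) : (G.deleteEdges s).Reachable u v := by
  refine ⟨p.toDeleteEdges s fun e he hes => ?_⟩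
  obtain ⟨y, hye, hy⟩ := hs e hes
  exact hy (p.mem_support_of_mem_edges he hye)

def SupportReachable (G : SimpleGraph V) (r : V) : Prop :=
  ∀ x ∈ G.support, G.Reachable r x

lemma Connected.supportReachable (hG : G.Connected) (r : V) : G.SupportReachable r :=
  fun x _ => hG.preconnected r x

lemma SupportReachable.of_forall_ne {c : V} (h : ∀ x ∈ G.support, x ≠ c → G.Reachable r x) :
    G.SupportReachable r := by
  intro x hx
  obtain ⟨y, hxy⟩ := hx
  by_cases hxc : x = c
  · exact (h y ⟨x, hxy.symm⟩ (hxc ▸ hxy.ne')).trans hxy.symm.reachable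
  · exact h x ⟨y, hxy⟩ hxc

variable {s : Set (Sym2 V)} {d : ℕ}

lemma SupportReachable.deleteEdges_of_isolated_far (hG : G.SupportReachable r)
    (hd : ∀ x ∈ G.support, G.dist r x ≤ d)
    (hs : ∀ e ∈ s, ∃ y ∈ e, d ≤ G.dist r y ∧ ∀ z, G.Adj y z → s(y, z) ∈ s) :
    (G.deleteEdges s).SupportReachable r := by
  rintro x ⟨z, hxz⟩
  obtain ⟨hxz, hxz_s⟩ := (deleteEdges_adj ..).mp hxz
  have hx : x ∈ G.support := ⟨z, hxz⟩
  obtain ⟨p, hp⟩ := (hG x hx).exists_walk_length_eq_dist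
  refine p.reachable_deleteEdges fun e he => ?_
  obtain ⟨y, hye, hdy, hy⟩ := hs e he
  refine ⟨y, hye, p.notMem_support_of_dist_le hp ?_ ((hd x hx).trans hdy)⟩
  rintro rfl
  exact hxz_s (hy z hxz)

/-- A shortest path from `r` through `c` to another vertex continues to a neighbour of `c` farther
from `r`, and by `hc` such a neighbour keeps no edge. -/
lemma SupportReachable.deleteEdges_of_incident (hG : G.SupportReachable r) {c : V}
    (hd : ∀ x ∈ G.support, G.dist r x ≤ G.dist r c + 1)
    (hc : ∀ y, G.Adj c y → G.dist r c < G.dist r y → ∀ z, G.Adj y z → s(y, z) ∈ s)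
    (hs : ∀ e ∈ s, c ∈ e) :
    (G.deleteEdges s).SupportReachable r := by
  classical
  refine SupportReachable.of_forall_ne (c := c) ?_
  rintro x ⟨z, hxz⟩ hxc
  obtain ⟨hxz, hxz_s⟩ := (deleteEdges_adj ..).mp hxz
  have hx : x ∈ G.support := ⟨z, hxz⟩
  obtain ⟨p, hp⟩ := (hG x hx).exists_walk_length_eq_dist
  suffices hcp : c ∉ p.support from p.reachable_deleteEdges fun e he => ⟨c, hs e he, hcp⟩
  intro hcp
  have hsplit := p.dist_add_dist_le_of_mem_support hp hcp
  have hcx := (p.dropUntil c hcp).reachable.pos_dist_of_ne hxc.symm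
  have hadj : G.Adj c x := dist_eq_one_iff_adj.mp (by linarith [hd x hx])
  exact hxz_s (hc x hadj (by linarith [hd x hx]) z hxz)

lemma SupportReachable.exists_adj_ne (hG : G.SupportReachable r) {u v : V} (huv : G.Adj u v)
    (hv : ∀ z, G.Adj v z → z = u) (h : 1 < G.edgeSet.ncard) : ∃ w, G.Adj u w ∧ w ≠ v := by
  by_contra! hu
  have hsupp : ∀ x ∈ G.support, x = u ∨ x = v := by
    intro x hx
    by_contra! hxuv
    obtain ⟨d, -, hd, hd'⟩ :=
      ((hG u ⟨v, huv⟩).symm.trans (hG x hx)).some.exists_boundary_dart {u, v} (by simp)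
        (by simpa using hxuv)
    rcases hd with hd | hd
    · exact hd' (Or.inr (hu _ (hd ▸ d.adj)))
    · exact hd' (Or.inl (hv _ (Set.mem_singleton_iff.mp hd ▸ d.adj)))
  have hsub : G.edgeSet ⊆ {s(u, v)} := by
    intro e he
    induction e using Sym2.ind with
    | _ x y =>
      rcases hsupp x ⟨y, he⟩ with rfl | rfl
      · simp [hu y he]
      · simp [hv y he, Sym2.eq_swap]
  have := Set.ncard_le_ncard hsub (Set.finite_singleton _)
  rw [Set.ncard_singleton] at this
  omega

lemma SupportReachable.exists_adj_adj_deleteEdges [Finite V] (hG : G.SupportReachable r)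
    (h : 1 < G.edgeSet.ncard) : ∃ c a b, a ≠ b ∧ G.Adj c a ∧ G.Adj c b ∧
      (G.deleteEdges {s(c, a), s(c, b)}).SupportReachable r := by
  obtain ⟨x, y, hxy⟩ : ∃ x y, G.Adj x y := by
    obtain ⟨e, he⟩ := Set.nonempty_of_ncard_ne_zero (by omega : G.edgeSet.ncard ≠ 0)
    induction e using Sym2.ind with
    | _ x y => exact ⟨x, y, he⟩
  obtain ⟨v, hv, hvmax⟩ :=
    G.support.exists_max_image (G.dist r) (Set.toFinite _) ⟨x, y, hxy⟩
  by_cases hfork : ∃ w ∈ G.support, G.dist r v ≤ G.dist r w ∧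
      ∃ a b, a ≠ b ∧ G.Adj w a ∧ G.Adj w b
  · obtain ⟨w, -, hvw, a, b, hab, hwa, hwb⟩ := hfork
    refine ⟨w, a, b, hab, hwa, hwb, hG.deleteEdges_of_incident
      (fun x hx => by linarith [hvmax x hx]) (fun y hwy hlt => ?_) (by simp)⟩
    linarith [hvmax y ⟨w, hwy.symm⟩]
  have hleaf : ∀ w ∈ G.support, G.dist r v ≤ G.dist r w → ∀ a b, G.Adj w a → G.Adj w b →
      a = b := fun w hw hvw a b ha hb => by_contra fun hab => hfork ⟨w, hw, hvw, a, b, hab, ha, hb⟩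
  obtain ⟨u, hvu⟩ := hv
  have hv_leaf : ∀ z, G.Adj v z → z = u := fun z hz => hleaf v ⟨u, hvu⟩ le_rfl z u hz hvu
  by_cases! hpair : ∃ w, G.Adj u w ∧ w ≠ v ∧ G.dist r v ≤ G.dist r w
  · obtain ⟨w, huw, hwv, hvw⟩ := hpair
    refine ⟨u, v, w, hwv.symm, hvu.symm, huw, hG.deleteEdges_of_isolated_far hvmax ?_⟩
    rintro e (rfl | rfl)
    · exact ⟨v, by simp, le_rfl, fun z hz => by simp [hv_leaf z hz, Sym2.eq_swap]⟩
    · refine ⟨w, by simp, hvw, fun z hz => ?_⟩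
      simp [hleaf w ⟨u, huw.symm⟩ hvw z u hz huw.symm, Sym2.eq_swap]
  obtain ⟨w, huw, hwv⟩ := hG.exists_adj_ne hvu.symm hv_leaf h
  have hvu_dist : G.dist r v ≤ G.dist r u + 1 := by
    simpa [dist_eq_one_iff_adj.mpr hvu.symm] using hvu.symm.reachable.dist_triangle_right r
  refine ⟨u, v, w, hwv.symm, hvu.symm, huw, hG.deleteEdges_of_incident
    (fun x hx => (hvmax x hx).trans hvu_dist) (fun y huy hlt z hyz => ?_) (by simp)⟩
  obtain rfl : y = v := by
    by_contra hyv
    linarith [hpair y huy hyv]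
  simp [hv_leaf z hyz, Sym2.eq_swap]

lemma exists_subgraph_iso_pathGraph_three {c a b : V} (hab : a ≠ b) (hca : G.Adj c a)
    (hcb : G.Adj c b) : ∃ K : G.Subgraph, Nonempty (K.coe ≃g pathGraph 3) ∧
      K.edgeSet = {s(c, a), s(c, b)} := by
  classical
  let p : G.Walk a b := .cons hca.symm (.cons hcb .nil)
  have hp : p.IsPath := by simp [p, hab, hca.ne', hcb.ne]
  refine ⟨p.toSubgraph, ⟨hp.pathGraphIsoToSubgraph.symm⟩, ?_⟩
  ext e
  simp [p, Sym2.eq_swap, or_comm]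

lemma Subgraph.ncard_edgeSet_eq_of_iso {W : Type*} {T : SimpleGraph W} {K : G.Subgraph}
    (φ : K.coe ≃g T) : K.edgeSet.ncard = T.edgeSet.ncard := by
  rw [← K.image_coe_edgeSet_coe, Set.ncard_image_of_injective _
    (Sym2.map.injective Subtype.val_injective), ← Nat.card_coe_set_eq,
    ← Nat.card_coe_set_eq]
  exact Nat.card_congr φ.mapEdgeSet

lemma ncard_edgeSet_pathGraph_three : (pathGraph 3).edgeSet.ncard = 2 := by
  rw [Set.ncard_eq_two]
  refine ⟨s(0, 1), s(1, 2), by decide, ?_⟩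
  ext e
  induction e using Sym2.ind with
  | _ x y => fin_cases x <;> fin_cases y <;> simp [pathGraph_adj]

variable {W : Type*} {T : SimpleGraph W} {E : Set (Sym2 V)} {D : Set G.Subgraph}

/-- `IsDecompInto` with `G.edgeSet` replaced by an arbitrary edge set `E`; the pieces remain
subgraphs of `G`, so that edges can be deleted without changing the ambient graph. -/
def IsDecompOnInto (G : SimpleGraph V) (E : Set (Sym2 V)) (T : SimpleGraph W)
    (D : Set G.Subgraph) : Prop :=
  (∀ K ∈ D, Nonempty (K.coe ≃g T)) ∧ D.PairwiseDisjoint Subgraph.edgeSet ∧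
    ⋃ K ∈ D, K.edgeSet = E

lemma isDecompOnInto_empty : IsDecompOnInto G ∅ T ∅ := by
  simp [IsDecompOnInto]

lemma IsDecompOnInto.insert {K : G.Subgraph} (hD : IsDecompOnInto G (E \ K.edgeSet) T D)
    (hK : Nonempty (K.coe ≃g T)) (hKE : K.edgeSet ⊆ E) : IsDecompOnInto G E T (insert K D) := by
  obtain ⟨hiso, hdisj, hunion⟩ := hD
  refine ⟨Set.forall_mem_insert.mpr ⟨hK, hiso⟩, hdisj.insert fun K' hK' _ => ?_, ?_⟩
  · refine Set.disjoint_of_subset_right ?_ (Set.disjoint_sdiff_right (t := E))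
    exact hunion ▸ Set.subset_biUnion_of_mem (u := Subgraph.edgeSet) hK'
  · rw [Set.biUnion_insert, hunion, Set.union_sdiff_cancel hKE]

lemma IsDecompOnInto.ncard_eq [Finite V] (hD : IsDecompOnInto G E T D) :
    E.ncard = D.ncard * T.edgeSet.ncard := by
  obtain ⟨hiso, hdisj, rfl⟩ := hD
  have hDfin := Set.toFinite D
  rw [hDfin.ncard_biUnion (fun _ _ => Set.toFinite _) hdisj,
    finsum_mem_congr rfl fun K hK => Subgraph.ncard_edgeSet_eq_of_iso (hiso K hK).some,
    finsum_mem_eq_finite_toFinset_sum _ hDfin, Finset.sum_const, smul_eq_mul,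
    Set.ncard_eq_toFinset_card D hDfin]

theorem SupportReachable.exists_isDecompOnInto_pathGraph_three [Finite V] {H : SimpleGraph V}
    (hHG : H ≤ G) (hH : H.SupportReachable r) (heven : Even H.edgeSet.ncard) :
    ∃ D : Set G.Subgraph, G.IsDecompOnInto H.edgeSet (pathGraph 3) D := by
  obtain ⟨k, hk⟩ := heven
  induction k generalizing H with
  | zero =>
    rw [(Set.ncard_eq_zero (Set.toFinite _)).mp hk]
    exact ⟨∅, isDecompOnInto_empty⟩
  | succ k ih =>
  obtain ⟨c, a, b, hab, hca, hcb, hH'⟩ := hH.exists_adj_adj_deleteEdges (by omega)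
  obtain ⟨K, hK, hKe⟩ := exists_subgraph_iso_pathGraph_three hab (hHG hca) (hHG hcb)
  have hKH : K.edgeSet ⊆ H.edgeSet := by
    rw [hKe]
    rintro e (rfl | rfl)
    exacts [hca, hcb]
  have hK2 : K.edgeSet.ncard = 2 :=
    (Subgraph.ncard_edgeSet_eq_of_iso hK.some).trans ncard_edgeSet_pathGraph_three
  have hcard : (H.deleteEdges K.edgeSet).edgeSet.ncard = k + k := by
    rw [edgeSet_deleteEdges, Set.ncard_sdiff hKH, hK2, hk]
    omega
  obtain ⟨D, hD⟩ := ih ((deleteEdges_le _).trans hHG) (hKe ▸ hH') hcard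
  rw [edgeSet_deleteEdges] at hD
  exact ⟨insert K D, hD.insert hK hKH⟩

end SimpleGraph

lemma isDecompInto_iff_isDecompOnInto {V W : Type} {G : SimpleGraph V} {T : SimpleGraph W}
    {D : Set G.Subgraph} : IsDecompInto G T D ↔ G.IsDecompOnInto G.edgeSet T D :=
  Iff.rfl

/-- Kotzig: a connected finite simple graph admits a decomposition into paths of
length `2` if and only if it has an even number of edges. -/
theorem p2_decomposition_iff_even_edges
    {V : Type} [Fintype V] (G : SimpleGraph V) (hconn : G.Connected) :
    (∃ D : Set G.Subgraph, IsDecompInto G (pathGraph 3) D) ↔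
      Even G.edgeSet.ncard := by
  simp only [isDecompInto_iff_isDecompOnInto]
  constructor
  · rintro ⟨D, hD⟩
    rw [hD.ncard_eq, ncard_edgeSet_pathGraph_three]
    exact even_two.mul_left _
  · intro heven
    obtain ⟨r⟩ := hconn.nonempty
    exact (hconn.supportReachable r).exists_isDecompOnInto_pathGraph_three le_rfl heven
end
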